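/- Let π, ρ ∈ L_CPL each be a conjunction of propositional variables or a disjunction of propositional variables such that π ⊭_CPL ρ, ρ ⊭_CPL π, and π ∧ ρ is CPL-satisfiable, let c, d ∈ [0,1]∩ℚ and ◇, ◇' ∈ {≤,<,>,≥}, and suppose both Pr(π)◇c̄ and Pr(ρ)◇'d̄ are FP-satisfiable and not FP-valid. Then Pr(π)◇c̄ ⊭_FP Pr(ρ)◇'d̄. -/

import Mathlib

open scoped Classical

/-- Classical propositional formulas (the language `L_CPL`), built from
propositional variables (indexed by `ℕ`) using ¬, ∧, ∨. -/
inductive CPL where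
  | var : ℕ → CPL
  | neg : CPL → CPL
  | and : CPL → CPL → CPL
  | or : CPL → CPL → CPL
deriving DecidableEq

namespace CPL

/-- The set of propositional variables occurring in a formula. -/
def vars : CPL → Finset ℕ
  | var p => {p}
  | neg φ => vars φ
  | and φ χ => vars φ ∪ vars χ
  | or φ χ => vars φ ∪ vars χ

/-- Classical evaluation of a formula under a Boolean valuation. -/
def eval (v : ℕ → Bool) : CPL → Bool
  | var p => v p
  | neg φ => !eval v φ
  | and φ χ => eval v φ && eval v χ
  | or φ χ => eval v φ || eval v χ

/-- Evaluation of a formula at a state given as a set of variables: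
the variables in `X` are true, all others false. -/
def evalSet (X : Finset ℕ) (φ : CPL) : Bool := eval (fun p => decide (p ∈ X)) φ

/-- CPL-satisfiability. -/
def Satisfiable (φ : CPL) : Prop := ∃ v, eval v φ = true

/-- CPL-validity. -/
def Valid (φ : CPL) : Prop := ∀ v, eval v φ = true

/-- Classical entailment `φ ⊨_CPL χ`. -/
def Entails (φ χ : CPL) : Prop := ∀ v, eval v φ = true → eval v χ = true

/-- A literal: a variable or a negated variable. -/
def IsLiteral (φ : CPL) : Prop := (∃ p, φ = var p) ∨ ∃ p, φ = neg (var p)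

/-- An `L_CPL`-term: a conjunction of literals. -/
inductive IsTerm : CPL → Prop
  | lit {φ} : IsLiteral φ → IsTerm φ
  | conj {φ χ} : IsTerm φ → IsTerm χ → IsTerm (and φ χ)

/-- A conjunction of propositional variables. -/
inductive IsConjVars : CPL → Prop
  | var (p : ℕ) : IsConjVars (var p)
  | conj {φ χ} : IsConjVars φ → IsConjVars χ → IsConjVars (and φ χ)

/-- A disjunction of propositional variables. -/
inductive IsDisjVars : CPL → Prop
  | var (p : ℕ) : IsDisjVars (var p)
  | disj {φ χ} : IsDisjVars φ → IsDisjVars χ → IsDisjVars (or φ χ)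

/-- Variables occurring as positive literals (in a term). -/
def posVars : CPL → Finset ℕ
  | var p => {p}
  | neg _ => ∅
  | and φ χ => posVars φ ∪ posVars χ
  | or _ _ => ∅

/-- Variables occurring as negated literals (in a term). -/
def negVars : CPL → Finset ℕ
  | var _ => ∅
  | neg (var p) => {p}
  | neg _ => ∅
  | and φ χ => negVars φ ∪ negVars χ
  | or _ _ => ∅

/-- The literals occurring in a term. -/
def lits (φ : CPL) : Finset CPL :=
  (posVars φ).image var ∪ (negVars φ).image (fun p => neg (var p))

end CPL

/-- A state (possible world) over a finite set `V` of variables: a subset of `V`. -/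
abbrev World (V : Finset ℕ) := {X : Finset ℕ // X ⊆ V}

/-- A probabilistic model for `V`: a finitely additive probability measure
`μ : 2^(2^V) → [0,1]`. -/
structure ProbModel (V : Finset ℕ) where
  μ : Set (World V) → ℝ
  nonneg : ∀ A, 0 ≤ μ A
  le_one : ∀ A, μ A ≤ 1
  m_univ : μ Set.univ = 1
  m_empty : μ ∅ = 0
  m_add : ∀ A B : Set (World V), Disjoint A B → μ (A ∪ B) = μ A + μ B

/-- The truth set `‖φ‖_M` of a classical formula in a probabilistic model for `V`. -/
def truthSet (V : Finset ℕ) (φ : CPL) : Set (World V) :=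
  {w | CPL.evalSet w.1 φ = true}

/-- Comparison symbols ◇ ∈ {≤, <, >, ≥}. -/
inductive Ineq where
  | le | lt | gt | ge
deriving DecidableEq

/-- The relation denoted by a comparison symbol. -/
def Ineq.holds : Ineq → ℝ → ℝ → Prop
  | le, x, c => x ≤ c
  | lt, x, c => x < c
  | gt, x, c => x > c
  | ge, x, c => x ≥ c

/-- Formulas of the probabilistic language `L^Q_Pr`, built from probabilistic atoms
`Pr(φ)` and `Pr(φ)◇c̄` using ¬, △, ⊙, ⊕, →. -/
inductive FP where
  | prob : CPL → FP
  | probIneq : CPL → Ineq → ℚ → FP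
  | neg : FP → FP
  | delta : FP → FP
  | conj : FP → FP → FP
  | disj : FP → FP → FP
  | impl : FP → FP → FP
deriving DecidableEq

namespace FP

/-- Well-formedness: all rational constants lie in `[0,1] ∩ ℚ`. -/
def WF : FP → Prop
  | prob _ => True
  | probIneq _ _ c => 0 ≤ c ∧ c ≤ 1
  | neg α => WF α
  | delta α => WF α
  | conj α β => WF α ∧ WF β
  | disj α β => WF α ∧ WF β
  | impl α β => WF α ∧ WF β

/-- The variables of an `L^Q_Pr`-formula. -/
def vars : FP → Finset ℕ
  | prob φ => φ.vars
  | probIneq φ _ _ => φ.vars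
  | neg α => vars α
  | delta α => vars α
  | conj α β => vars α ∪ vars β
  | disj α β => vars α ∪ vars β
  | impl α β => vars α ∪ vars β

/-- The events `E(α)`: the classical formulas occurring in probabilistic atoms of `α`. -/
def events : FP → Finset CPL
  | prob φ => {φ}
  | probIneq φ _ _ => {φ}
  | neg α => events α
  | delta α => events α
  | conj α β => events α ∪ events β
  | disj α β => events α ∪ events β
  | impl α β => events α ∪ events β

/-- The FP-interpretation `I_M` induced by a probabilistic model `M`. -/
noncomputable def interp {V : Finset ℕ} (M : ProbModel V) : FP → ℝ
  | prob φ => M.μ (truthSet V φ)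
  | probIneq φ d c => if d.holds (M.μ (truthSet V φ)) (c : ℝ) then 1 else 0
  | neg α => 1 - interp M α
  | delta α => if interp M α = 1 then 1 else 0
  | conj α β => max 0 (interp M α + interp M β - 1)
  | disj α β => min 1 (interp M α + interp M β)
  | impl α β => min 1 (1 - interp M α + interp M β)

/-- `α` is FP-satisfiable: `I_M(α) = 1` in some probabilistic model for `Var(α)`. -/
def Satisfiable (α : FP) : Prop := ∃ M : ProbModel α.vars, interp M α = 1

/-- `α` is FP-valid: `I_M(α) = 1` in every probabilistic model for `Var(α)`. -/
def Valid (α : FP) : Prop := ∀ M : ProbModel α.vars, interp M α = 1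

/-- `α ⊨_FP β`: `I_M(β) = 1` in every probabilistic model for the variables of
`{α, β}` with `I_M(α) = 1`. -/
def Entails1 (α β : FP) : Prop :=
  ∀ M : ProbModel (α.vars ∪ β.vars), interp M α = 1 → interp M β = 1

/-- The variables of a finite set of `L^Q_Pr`-formulas. -/
def varsSet (Γ : Finset FP) : Finset ℕ := Γ.sup vars

/-- A finite set `Γ` is FP-satisfiable (`Γ ⊭_FP ⊥`): some probabilistic model for
the variables of `Γ` makes every member of `Γ` equal to `1`. -/
def SetSatisfiable (Γ : Finset FP) : Prop :=
  ∃ M : ProbModel (varsSet Γ), ∀ γ ∈ Γ, interp M γ = 1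

/-- `Γ ⊨_FP δ`: every probabilistic model for the variables of `Γ ∪ {δ}` satisfying
all of `Γ` satisfies `δ`. -/
def EntailsFin (Γ : Finset FP) (δ : FP) : Prop :=
  ∀ M : ProbModel (varsSet Γ ∪ δ.vars), (∀ γ ∈ Γ, interp M γ = 1) → interp M δ = 1

/-- `Γ ⊨^cons_FP δ`: `Γ ⊨_FP δ` and `Γ ⊭_FP ⊥`. -/
def ConsEntails (Γ : Finset FP) (δ : FP) : Prop :=
  EntailsFin Γ δ ∧ SetSatisfiable Γ

/-- The set of permitted values `V_Pr(Pr(φ)◇c̄)`. -/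
def permittedValues (φ : CPL) (d : Ineq) (c : ℚ) : Set ℝ :=
  {x | ∃ (V : Finset ℕ) (M : ProbModel V), φ.vars ⊆ V ∧
      interp M (probIneq φ d c) = 1 ∧ M.μ (truthSet V φ) = x}

end FP

/-- Formulas of the Łukasiewicz language `L^Q_Ł`, built from propositional variables
and truth-constant literals `p◇c̄` using ¬, △, ⊙, ⊕, →. -/
inductive Luk where
  | var : ℕ → Luk
  | ineq : ℕ → Ineq → ℚ → Luk
  | neg : Luk → Luk
  | delta : Luk → Luk
  | conj : Luk → Luk → Luk
  | disj : Luk → Luk → Luk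
  | impl : Luk → Luk → Luk
deriving DecidableEq

/-- An Ł-valuation: a function `Var → [0,1]`. -/
structure LukVal where
  v : ℕ → ℝ
  mem : ∀ p, v p ∈ Set.Icc (0 : ℝ) 1

/-- Extension of an Ł-valuation to all `L^Q_Ł`-formulas. -/
noncomputable def LukVal.eval (val : LukVal) : Luk → ℝ
  | .var p => val.v p
  | .ineq p d c => if d.holds (val.v p) (c : ℝ) then 1 else 0
  | .neg φ => 1 - val.eval φ
  | .delta φ => if val.eval φ = 1 then 1 else 0
  | .conj φ χ => max 0 (val.eval φ + val.eval χ - 1)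
  | .disj φ χ => min 1 (val.eval φ + val.eval χ)
  | .impl φ χ => min 1 (1 - val.eval φ + val.eval χ)

namespace Luk

/-- Well-formedness: all rational constants lie in `[0,1] ∩ ℚ`. -/
def WF : Luk → Prop
  | var _ => True
  | ineq _ _ c => 0 ≤ c ∧ c ≤ 1
  | neg φ => WF φ
  | delta φ => WF φ
  | conj φ χ => WF φ ∧ WF χ
  | disj φ χ => WF φ ∧ WF χ
  | impl φ χ => WF φ ∧ WF χ

/-- `Φ ⊨_Ł χ` for a finite set `Φ`. -/
def EntailsFin (Φ : Finset Luk) (χ : Luk) : Prop :=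
  ∀ val : LukVal, (∀ φ ∈ Φ, val.eval φ = 1) → val.eval χ = 1

/-- `φ` is Ł-valid. -/
def ValidL (φ : Luk) : Prop := ∀ val : LukVal, val.eval φ = 1

/-- A set of `L^Q_Ł`-formulas is Ł-satisfiable. -/
def SatisfiableSet (S : Set Luk) : Prop := ∃ val : LukVal, ∀ φ ∈ S, val.eval φ = 1

/-- The probabilistic counterpart `φ^Pr` of a Łukasiewicz formula. -/
def toFP : Luk → FP
  | var p => .prob (.var p)
  | ineq p d c => .probIneq (.var p) d c
  | neg φ => .neg (toFP φ)
  | delta φ => .delta (toFP φ)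
  | conj φ χ => .conj (toFP φ) (toFP χ)
  | disj φ χ => .disj (toFP φ) (toFP χ)
  | impl φ χ => .impl (toFP φ) (toFP χ)

end Luk

namespace FP

/-- The outer counterpart `α^↑` of an `L^Q_Pr`-formula, replacing each atom `Pr(φ)`
by the fresh variable `e φ` (and `Pr(φ)◇c̄` by `(e φ)◇c̄`). -/
def outer (e : CPL → ℕ) : FP → Luk
  | prob φ => .var (e φ)
  | probIneq φ d c => .ineq (e φ) d c
  | neg α => .neg (outer e α)
  | delta α => .delta (outer e α)
  | conj α β => .conj (outer e α) (outer e β)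
  | disj α β => .disj (outer e α) (outer e β)
  | impl α β => .impl (outer e α) (outer e β)

end FP

/-- The ⊙-conjunction of a (nonempty) list of `L^Q_Pr`-formulas. -/
def bigConjFP : List FP → FP
  | [] => .probIneq (.var 0) .ge 0
  | a :: t => t.foldl .conj a

/-- The ∨-disjunction of a (nonempty) list of classical formulas. -/
def bigDisjCPL : List CPL → CPL
  | [] => .var 0
  | a :: t => t.foldl .or a

/-- The PIT `⊙_i Pr(τ_i)≤c̄_i ⊙ ⊙_i Pr(τ_i)≥c̄_i` associated with the list of
pairs `(τ_i, c_i)`. -/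
def completePITFormula (L : List (CPL × ℚ)) : FP :=
  bigConjFP (L.map (fun t => FP.probIneq t.1 .le t.2) ++
             L.map (fun t => FP.probIneq t.1 .ge t.2))

/-- `τ` is an `L_CPL`-term containing, for every `p ∈ V`, exactly one of the
literals `p` and `¬p` (and no other variables). -/
def IsCompleteTermOver (V : Finset ℕ) (τ : CPL) : Prop :=
  CPL.IsTerm τ ∧ τ.vars ⊆ V ∧ ∀ p ∈ V, (p ∈ τ.posVars ↔ p ∉ τ.negVars)

/-- Membership in `𝒱 = {0, 1/n, …, (n−1)/n, 1}`. -/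
def memVSet (n : ℕ) (c : ℚ) : Prop := ∃ k : ℕ, k ≤ n ∧ c = (k : ℚ) / (n : ℚ)

/-- The data `(τ_i, c_i)` of a `⟨V,𝒱⟩`-complete PIT (with `𝒱` given by `n`). -/
def IsCompletePIT (V : Finset ℕ) (n : ℕ) (L : List (CPL × ℚ)) : Prop :=
  (L.map Prod.fst).Nodup ∧
  (∀ t ∈ L, IsCompleteTermOver V t.1 ∧ memVSet n t.2) ∧
  (L.map Prod.snd).sum = 1

/-- A measure is coherent with a value assignment `pr` on the events `E`. -/
def coherent {V : Finset ℕ} (M : ProbModel V) (E : Finset CPL) (pr : CPL → ℚ) : Prop :=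
  ∀ ψ ∈ E, M.μ (truthSet V ψ) = (pr ψ : ℝ)

/-- Conditional probability `Pr_μ(φ | χ) = μ(‖φ∧χ‖)/μ(‖χ‖)`. -/
noncomputable def condProb {V : Finset ℕ} (M : ProbModel V) (φ χ : CPL) : ℝ :=
  M.μ (truthSet V (CPL.and φ χ)) / M.μ (truthSet V χ)

/-- `τ` is a solution to the PrAP `⟨{φ}, χ, H, E, pr⟩`: an `L_CPL`-term composed of
literals from `H` s.t. `φ, τ ⊨_CPL χ` and some probabilistic model coherent with `pr`
gives `μ(‖φ∧τ‖) > 0`. -/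
def IsPrAPSolution (φ χ : CPL) (H E : Finset CPL) (pr : CPL → ℚ) (τ : CPL) : Prop :=
  CPL.IsTerm τ ∧ τ.lits ⊆ H ∧
  (∀ v, CPL.eval v φ = true → CPL.eval v τ = true → CPL.eval v χ = true) ∧
  ∃ M : ProbModel (φ.vars ∪ χ.vars),
    coherent M E pr ∧ 0 < M.μ (truthSet (φ.vars ∪ χ.vars) (CPL.and φ τ))

/-- `τ` is a preferred solution: a solution s.t. for every other solution `σ` there is
a probabilistic model coherent with `pr` with `μ(‖τ‖) ≥ μ(‖σ‖)`. -/
def IsPreferredPrAPSolution (φ χ : CPL) (H E : Finset CPL) (pr : CPL → ℚ) (τ : CPL) : Prop :=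
  IsPrAPSolution φ χ H E pr τ ∧
  ∀ σ, IsPrAPSolution φ χ H E pr σ → σ ≠ τ →
    ∃ M : ProbModel (φ.vars ∪ χ.vars),
      coherent M E pr ∧
      M.μ (truthSet (φ.vars ∪ χ.vars) σ) ≤ M.μ (truthSet (φ.vars ∪ χ.vars) τ)

/-- The FP-counterpart `Ξ_p = {Pr(ψ)≈c̄ : ψ ∈ E, p(ψ) = c}` of a value assignment,
where `Pr(ψ)≈c̄` abbreviates `(Pr(ψ)≥c̄) ⊙ (Pr(ψ)≤c̄)`. -/
def XiP (E : Finset CPL) (pr : CPL → ℚ) : Finset FP :=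
  E.image (fun ψ => FP.conj (FP.probIneq ψ .ge (pr ψ)) (FP.probIneq ψ .le (pr ψ)))

/-- The next weakest PIL `λ^♭_𝒱` of the PIL `Pr(τ)◇(k/n)`. -/
def flatPIL (n : ℕ) (τ : CPL) (d : Ineq) (k : ℕ) : FP :=
  match d with
  | .ge => FP.probIneq τ .gt (((k : ℚ) - 1) / (n : ℚ))
  | .gt => FP.probIneq τ .ge ((k : ℚ) / (n : ℚ))
  | .le => FP.probIneq τ .lt (((k : ℚ) + 1) / (n : ℚ))
  | .lt => FP.probIneq τ .le ((k : ℚ) / (n : ℚ))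

/-- The theory `Ψ_Γ = Γ^↑ ∪ {p_φ → p_χ : φ, χ ∈ E[Γ], φ ⊨_CPL χ}`. -/
def PsiGamma (Γ : Finset FP) (e : CPL → ℕ) : Set Luk :=
  (fun α => FP.outer e α) '' (↑Γ : Set FP) ∪
  {ψ | ∃ φ ∈ Γ.sup FP.events, ∃ χ ∈ Γ.sup FP.events,
        CPL.Entails φ χ ∧ ψ = Luk.impl (.var (e φ)) (.var (e χ))}

/-- The conjunction `hd ∧ ⋀_{q ∈ s} q`. -/
def conjVarsFrom (hd : CPL) (s : Finset ℕ) : CPL :=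
  (s.sort (· ≤ ·)).foldl (fun acc q => CPL.and acc (CPL.var q)) hd

/-! Two probabilistic atoms over variable-only conjunctions/disjunctions are independent
constraints: the four Boolean combinations of `π` and `ρ` are all realised by some world
(the empty world falsifies both), so putting weights `a`, `x - a`, `y - a`, `1 - x - y + a`
with `a = max 0 (x + y - 1)` on these worlds gives `μ‖π‖ = x` and `μ‖ρ‖ = y` for any
`x, y ∈ [0,1]`. Choosing `x` permitted by `Pr(π)◇c̄` and `y` forbidden by `Pr(ρ)◇'d̄`
refutes the entailment. -/

namespace CPL

theorem eval_congr {v w : ℕ → Bool} :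
    ∀ {φ : CPL}, (∀ p ∈ φ.vars, v p = w p) → eval v φ = eval w φ
  | var p, h => h p (by simp [vars])
  | neg φ, h => by simp only [eval, eval_congr (φ := φ) h]
  | and φ χ, h => by
      simp only [vars, Finset.mem_union] at h
      simp only [eval, eval_congr (φ := φ) fun p hp => h p (.inl hp),
        eval_congr (φ := χ) fun p hp => h p (.inr hp)]
  | or φ χ, h => by
      simp only [vars, Finset.mem_union] at h
      simp only [eval, eval_congr (φ := φ) fun p hp => h p (.inl hp),
        eval_congr (φ := χ) fun p hp => h p (.inr hp)]

theorem IsConjVars.eval_false {φ : CPL} (h : IsConjVars φ) : eval (fun _ => false) φ = false := by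
  induction h <;> simp_all [eval]

theorem IsDisjVars.eval_false {φ : CPL} (h : IsDisjVars φ) : eval (fun _ => false) φ = false := by
  induction h <;> simp_all [eval]

end CPL

def World.ofValuation (V : Finset ℕ) (v : ℕ → Bool) : World V :=
  ⟨V.filter (fun p => v p), Finset.filter_subset _ _⟩

theorem World.ofValuation_mem_truthSet {V : Finset ℕ} {φ : CPL} (hφ : φ.vars ⊆ V)
    (v : ℕ → Bool) : World.ofValuation V v ∈ truthSet V φ ↔ CPL.eval v φ = true := by
  suffices CPL.evalSet (World.ofValuation V v).1 φ = CPL.eval v φ by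
    simp only [truthSet, Set.mem_ofPred_eq, this]
  refine CPL.eval_congr fun p hp => ?_
  simp [World.ofValuation, hφ hp]

namespace ProbModel

variable {V : Finset ℕ}

noncomputable def ofWeights {ι : Type*} [Fintype ι] (w : ι → World V) (p : ι → ℝ)
    (hp : ∀ i, 0 ≤ p i) (hsum : ∑ i, p i = 1) : ProbModel V where
  μ A := ∑ i with w i ∈ A, p i
  nonneg _ := Finset.sum_nonneg fun i _ => hp i
  le_one _ := hsum ▸ Finset.sum_le_sum_of_subset_of_nonneg (Finset.filter_subset _ _)
    fun i _ _ => hp i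
  m_univ := by simpa using hsum
  m_empty := by simp
  m_add A B hAB := by
    simp only [Set.mem_union, Finset.filter_or]
    refine Finset.sum_union (Finset.disjoint_filter.2 fun i _ hA hB => ?_)
    exact Set.disjoint_left.1 hAB hA hB

theorem ofWeights_μ {ι : Type*} [Fintype ι] (w : ι → World V) (p : ι → ℝ)
    (hp : ∀ i, 0 ≤ p i) (hsum : ∑ i, p i = 1) (A : Set (World V)) :
    (ofWeights w p hp hsum).μ A = ∑ i, if w i ∈ A then p i else 0 :=
  Finset.sum_filter _ _

theorem μ_mem_Icc (M : ProbModel V) (A : Set (World V)) : M.μ A ∈ Set.Icc (0 : ℝ) 1 :=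
  ⟨M.nonneg A, M.le_one A⟩

theorem exists_μ_eq_of_cells_nonempty {A B : Set (World V)} {w₁₁ w₁₀ w₀₁ w₀₀ : World V}
    (h₁₁ : w₁₁ ∈ A ∩ B) (h₁₀ : w₁₀ ∈ A \ B) (h₀₁ : w₀₁ ∈ B \ A) (h₀₀ : w₀₀ ∈ (A ∪ B)ᶜ)
    {x y : ℝ} (hx : x ∈ Set.Icc (0 : ℝ) 1) (hy : y ∈ Set.Icc (0 : ℝ) 1) :
    ∃ M : ProbModel V, M.μ A = x ∧ M.μ B = y := by
  obtain ⟨h₁₁A, h₁₁B⟩ := h₁₁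
  obtain ⟨h₁₀A, h₁₀B⟩ := h₁₀
  obtain ⟨h₀₁B, h₀₁A⟩ := h₀₁
  simp only [Set.mem_compl_iff, Set.mem_union, not_or] at h₀₀
  set a := max 0 (x + y - 1)
  have ha₀ : 0 ≤ a := le_max_left _ _
  have ha₁ : x + y - 1 ≤ a := le_max_right _ _
  have hax : a ≤ x := max_le hx.1 (by linarith [hy.2])
  have hay : a ≤ y := max_le hy.1 (by linarith [hx.2])
  have hp : ∀ i, 0 ≤ ![a, x - a, y - a, 1 - x - y + a] i := by
    intro i; fin_cases i <;> simp <;> linarith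
  have hsum : ∑ i, ![a, x - a, y - a, 1 - x - y + a] i = 1 := by
    simp [Fin.sum_univ_four]; ring
  refine ⟨ofWeights ![w₁₁, w₁₀, w₀₁, w₀₀] _ hp hsum, ?_, ?_⟩ <;>
    simp [ofWeights_μ, Fin.sum_univ_four, *]

theorem exists_μ_truthSet_eq {φ ψ : CPL} (hφ : φ.vars ⊆ V) (hψ : ψ.vars ⊆ V)
    {v₁₁ v₁₀ v₀₁ v₀₀ : ℕ → Bool} (h₁₁ : CPL.eval v₁₁ φ = true ∧ CPL.eval v₁₁ ψ = true)
    (h₁₀ : CPL.eval v₁₀ φ = true ∧ CPL.eval v₁₀ ψ = false)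
    (h₀₁ : CPL.eval v₀₁ ψ = true ∧ CPL.eval v₀₁ φ = false)
    (h₀₀ : CPL.eval v₀₀ φ = false ∧ CPL.eval v₀₀ ψ = false)
    {x y : ℝ} (hx : x ∈ Set.Icc (0 : ℝ) 1) (hy : y ∈ Set.Icc (0 : ℝ) 1) :
    ∃ M : ProbModel V, M.μ (truthSet V φ) = x ∧ M.μ (truthSet V ψ) = y :=
  exists_μ_eq_of_cells_nonempty (w₁₁ := World.ofValuation V v₁₁)
    (w₁₀ := World.ofValuation V v₁₀) (w₀₁ := World.ofValuation V v₀₁)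
    (w₀₀ := World.ofValuation V v₀₀)
    (by simp [World.ofValuation_mem_truthSet, hφ, hψ, h₁₁])
    (by simp [World.ofValuation_mem_truthSet, hφ, hψ, h₁₀])
    (by simp [World.ofValuation_mem_truthSet, hφ, hψ, h₀₁])
    (by simp [World.ofValuation_mem_truthSet, hφ, hψ, h₀₀]) hx hy

end ProbModel

namespace FP

theorem interp_probIneq_eq_one_iff {V : Finset ℕ} (M : ProbModel V) (φ : CPL) (d : Ineq)
    (c : ℚ) : interp M (probIneq φ d c) = 1 ↔ d.holds (M.μ (truthSet V φ)) c := by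
  simp only [interp]
  split_ifs with h <;> simp [h]

theorem Satisfiable.exists_holds {φ : CPL} {d : Ineq} {c : ℚ}
    (h : (probIneq φ d c).Satisfiable) : ∃ x ∈ Set.Icc (0 : ℝ) 1, d.holds x c := by
  obtain ⟨M, hM⟩ := h
  exact ⟨_, M.μ_mem_Icc _, (interp_probIneq_eq_one_iff M φ d c).1 hM⟩

theorem exists_not_holds_of_not_valid {φ : CPL} {d : Ineq} {c : ℚ}
    (h : ¬ (probIneq φ d c).Valid) : ∃ y ∈ Set.Icc (0 : ℝ) 1, ¬ d.holds y c := by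
  obtain ⟨M, hM⟩ := not_forall.1 h
  exact ⟨_, M.μ_mem_Icc _, mt (interp_probIneq_eq_one_iff M φ d c).2 hM⟩

end FP

theorem stmt13_general (π ρ : CPL)
    (hπ : CPL.IsConjVars π ∨ CPL.IsDisjVars π)
    (hρ : CPL.IsConjVars ρ ∨ CPL.IsDisjVars ρ)
    (hn1 : ¬ CPL.Entails π ρ) (hn2 : ¬ CPL.Entails ρ π)
    (hsat : CPL.Satisfiable (CPL.and π ρ))
    (c d : ℚ)
    (s s' : Ineq)
    (h1 : FP.Satisfiable (FP.probIneq π s c))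
    (h4 : ¬ FP.Valid (FP.probIneq ρ s' d)) :
    ¬ FP.Entails1 (FP.probIneq π s c) (FP.probIneq ρ s' d) := by
  obtain ⟨x, hx, hxc⟩ := h1.exists_holds
  obtain ⟨y, hy, hyd⟩ := FP.exists_not_holds_of_not_valid h4
  obtain ⟨v₁₁, h₁₁⟩ := hsat
  obtain ⟨v₁₀, h₁₀⟩ : ∃ v, CPL.eval v π = true ∧ CPL.eval v ρ = false := by
    simpa [CPL.Entails] using hn1
  obtain ⟨v₀₁, h₀₁⟩ : ∃ v, CPL.eval v ρ = true ∧ CPL.eval v π = false := by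
    simpa [CPL.Entails] using hn2
  obtain ⟨M, hMπ, hMρ⟩ := ProbModel.exists_μ_truthSet_eq (V := π.vars ∪ ρ.vars)
    Finset.subset_union_left Finset.subset_union_right (by simpa [CPL.eval] using h₁₁) h₁₀ h₀₁
    ⟨hπ.elim (·.eval_false) (·.eval_false), hρ.elim (·.eval_false) (·.eval_false)⟩ hx hy
  intro hEnt
  have hρM := hEnt M ((FP.interp_probIneq_eq_one_iff M π s c).2 (hMπ ▸ hxc))
  exact hyd (hMρ ▸ (FP.interp_probIneq_eq_one_iff M ρ s' d).1 hρM)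

/-- For `π, ρ` conjunctions/disjunctions of variables with `π ⊭_CPL ρ`,
`ρ ⊭_CPL π`, `π ∧ ρ` CPL-satisfiable, and both PILs FP-satisfiable and not FP-valid:
`Pr(π)◇c̄ ⊭_FP Pr(ρ)◇'d̄`. -/
theorem stmt13 (π ρ : CPL)
    (hπ : CPL.IsConjVars π ∨ CPL.IsDisjVars π)
    (hρ : CPL.IsConjVars ρ ∨ CPL.IsDisjVars ρ)
    (hn1 : ¬ CPL.Entails π ρ) (hn2 : ¬ CPL.Entails ρ π)
    (hsat : CPL.Satisfiable (CPL.and π ρ))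
    (c d : ℚ) (hc0 : 0 ≤ c) (hc1 : c ≤ 1) (hd0 : 0 ≤ d) (hd1 : d ≤ 1)
    (s s' : Ineq)
    (h1 : FP.Satisfiable (FP.probIneq π s c)) (h2 : ¬ FP.Valid (FP.probIneq π s c))
    (h3 : FP.Satisfiable (FP.probIneq ρ s' d)) (h4 : ¬ FP.Valid (FP.probIneq ρ s' d)) :
    ¬ FP.Entails1 (FP.probIneq π s c) (FP.probIneq ρ s' d) :=
  stmt13_general π ρ hπ hρ hn1 hn2 hsat c d s s' h1 h4
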